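/- For the round metric g = I₃ (the 3×3 identity matrix), the quantum Levi-Civita connection coefficients are Γ_{ijk} = ε_{ijk}, the Ricci tensor is R_{mn} = −(1/4)δ_{mn}, and the Ricci scalar is S = −3/4. -/

import Mathlib

/-! For `g = 1` the trace is `3` and `ε_{ikj} = -ε_{ijk}`, so `Γ = -2ε + 3ε = ε`, and raising
indices changes nothing. The contraction identity `ε_{lim} ε_{lnk} = δ_{in} δ_{mk} - δ_{ik} δ_{mn}`
turns the quadratic term of `ρ` into `ε_{ijk}`, so `ρ = ε/4 - ε/8 = ε/8`; contracting once more
gives `R_{mn} = -(1/8) · 2 δ_{mn}`, whose trace is `S = -3/4`. -/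

open scoped BigOperators

/-- The Levi-Civita symbol on `{1,2,3}` (totally antisymmetric, `ε₁₂₃ = 1`). -/
noncomputable def eps (i j k : Fin 3) : ℝ :=
  (((j : ℕ) : ℝ) - ((i : ℕ) : ℝ)) * (((k : ℕ) : ℝ) - ((j : ℕ) : ℝ)) *
    (((k : ℕ) : ℝ) - ((i : ℕ) : ℝ)) / 2

/-- The Christoffel symbols `Γ_{ijk} = 2 ε_{ikm} g_{mj} + Tr(g) ε_{ijk}` of the quantum
Levi-Civita connection. -/
noncomputable def Gam (g : Matrix (Fin 3) (Fin 3) ℝ) (i j k : Fin 3) : ℝ :=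
  2 * ∑ m, eps i k m * g m j + g.trace * eps i j k

/-- The raised-index Christoffel symbols `Γ^i_{jk} = h_{im} Γ_{mjk}`, `h = g⁻¹`. -/
noncomputable def GamU (g : Matrix (Fin 3) (Fin 3) ℝ) (i j k : Fin 3) : ℝ :=
  ∑ m, g⁻¹ i m * Gam g m j k

/-- The curvature coefficients `ρ^i_{jk} = (1/4)Γ^i_{jk} − (1/8) ε_{jmn} Γ^i_{ml} Γ^l_{nk}`. -/
noncomputable def rho (g : Matrix (Fin 3) (Fin 3) ℝ) (i j k : Fin 3) : ℝ :=
  (1 / 4) * GamU g i j k -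
    (1 / 8) * ∑ m, ∑ n, ∑ l, eps j m n * GamU g i m l * GamU g l n k

/-- The Ricci tensor `R_{mn} = ρ^i_{jn} ε_{jim}`. -/
noncomputable def RicciT (g : Matrix (Fin 3) (Fin 3) ℝ) (m n : Fin 3) : ℝ :=
  ∑ i, ∑ j, rho g i j n * eps j i m

/-- The Ricci scalar `S = R_{mn} h_{mn}`, `h = g⁻¹`. -/
noncomputable def Sscal (g : Matrix (Fin 3) (Fin 3) ℝ) : ℝ :=
  ∑ m, ∑ n, RicciT g m n * g⁻¹ m n

lemma eps_swap_right (i j k : Fin 3) : eps i k j = -eps i j k := by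
  unfold eps; ring

lemma eps_swap_left (i j k : Fin 3) : eps j i k = -eps i j k := by
  unfold eps; ring

lemma eps_cycle (i j k : Fin 3) : eps j k i = eps i j k := by
  unfold eps; ring

lemma eps_self_right (i j : Fin 3) : eps i j j = 0 := by
  unfold eps; ring

lemma sum_eps_mul_eps (i m n k : Fin 3) :
    ∑ l, eps l i m * eps l n k =
      (if i = n then 1 else 0) * (if m = k then 1 else 0) -
        (if i = k then 1 else 0) * (if m = n then 1 else 0) := by
  fin_cases i <;> fin_cases m <;> fin_cases n <;> fin_cases k <;>
    norm_num [eps, Fin.sum_univ_three]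

lemma sum_sum_eps_mul_eps (n m : Fin 3) :
    ∑ i, ∑ j, eps j i n * eps j i m = 2 * if n = m then 1 else 0 := by
  simp only [sum_eps_mul_eps, Finset.sum_sub_distrib, ite_mul, one_mul, zero_mul]
  simp only [Finset.sum_ite_eq', Finset.mem_univ, if_true, Finset.sum_ite_irrel,
    Finset.sum_const, Finset.card_univ, Fintype.card_fin]
  split_ifs <;> norm_num

lemma sum_eps_mul_eps_mul_eps (i j k : Fin 3) :
    ∑ m, ∑ n, eps j m n * ∑ l, eps i m l * eps l n k = eps i j k := by
  have hcyc (m l : Fin 3) : eps i m l = eps l i m := eps_cycle l i m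
  simp only [hcyc, sum_eps_mul_eps, mul_sub, mul_ite, mul_one, mul_zero,
    Finset.sum_sub_distrib]
  simp only [Finset.sum_ite_irrel, Finset.sum_ite_eq, Finset.sum_ite_eq', Finset.mem_univ,
    ↓reduceIte, Finset.sum_const_zero, eps_self_right, ite_self, sub_zero]
  exact (eps_cycle i j k).trans (eps_cycle k i j)

lemma gam_one (i j k : Fin 3) : Gam 1 i j k = eps i j k := by
  simp only [Gam, Matrix.one_apply, mul_ite, mul_one, mul_zero, Finset.sum_ite_eq',
    Finset.mem_univ, if_true, Matrix.trace_one, Fintype.card_fin]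
  rw [eps_swap_right]
  push_cast; ring

lemma gamU_one (i j k : Fin 3) : GamU 1 i j k = eps i j k := by
  simp [GamU, Matrix.one_apply, gam_one, ite_mul]

lemma rho_one (i j k : Fin 3) : rho 1 i j k = eps i j k / 8 := by
  simp only [rho, gamU_one, mul_assoc, ← Finset.mul_sum, sum_eps_mul_eps_mul_eps]
  ring

lemma ricciT_one (m n : Fin 3) : RicciT 1 m n = -(1 / 4) * if m = n then 1 else 0 := by
  have hswap (i j : Fin 3) : eps i j n / 8 * eps j i m = -(1 / 8) * (eps j i n * eps j i m) := by
    rw [eps_swap_left]; ring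
  simp only [RicciT, rho_one, hswap, ← Finset.mul_sum, sum_sum_eps_mul_eps, eq_comm (a := n)]
  ring

/-- For the round metric `g = I₃`: the quantum Levi-Civita connection coefficients are
`Γ_{ijk} = ε_{ijk}`, the Ricci tensor is `R_{mn} = −(1/4)δ_{mn}`, and the Ricci scalar is
`S = −3/4`. -/
theorem round_metric_geometry :
    (∀ i j k, Gam (1 : Matrix (Fin 3) (Fin 3) ℝ) i j k = eps i j k) ∧
      (∀ m n, RicciT (1 : Matrix (Fin 3) (Fin 3) ℝ) m n =
        -(1 / 4) * (if m = n then (1 : ℝ) else 0)) ∧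
      Sscal (1 : Matrix (Fin 3) (Fin 3) ℝ) = -(3 / 4) := by
  refine ⟨gam_one, ricciT_one, ?_⟩
  simp only [Sscal, ricciT_one, inv_one, Matrix.one_apply]
  norm_num
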